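/- arXiv:1712.00850 — 8 statements merged into one kernel-verified Lean document; each statement's English description precedes it below -/
import Mathlib

section
/- Let C be a triangulated category closed under coproducts of fewer than α objects (for a regular cardinal α). Then the coproduct of any family of distinguished triangles of cardinality less than α is a distinguished triangle. -/
/-!
Passing to the opposite category turns coproducts into products, and the anti-equivalence
`triangleOpEquivalence` sends the coproduct of the triangles `T i` to the product of the opposite
triangles. That product is distinguished by `productTriangle_distinguished`, hence so is the
coproduct.
-/

open CategoryTheory CategoryTheory.Limits CategoryTheory.Pretriangulated

lemma CategoryTheory.Limits.Sigma.map_op_comp_opCoproductIsoProduct_hom {C : Type*} [Category* C]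
    {J : Type*} {X Y : J → C} [HasCoproduct X] [HasCoproduct Y] (f : ∀ j, X j ⟶ Y j) :
    (Limits.Sigma.map f).op ≫ (opCoproductIsoProduct X).hom =
      (opCoproductIsoProduct Y).hom ≫ Limits.Pi.map fun j => (f j).op := by
  refine Pi.hom_ext _ _ (fun j => ?_)
  simp [← op_comp]

section

open CategoryTheory.Pretriangulated.Opposite

variable {C : Type*} [Category* C] [HasShift C ℤ] {J : Type*}

lemma sigmaDesc_comp_shift_ι_op_shift_comp_opCoproductIsoProduct_hom [HasCoproductsOfShape J C]
    {X Y : J → C} (f : ∀ j, Y j ⟶ (X j)⟦(1 : ℤ)⟧) :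
    ((opShiftFunctorEquivalence C 1).counitIso.inv.app (Opposite.op (∐ X)) ≫
      ((Sigma.desc fun j => f j ≫ (Sigma.ι X j)⟦(1 : ℤ)⟧').op)⟦(1 : ℤ)⟧') ≫
        (opCoproductIsoProduct Y).hom⟦(1 : ℤ)⟧' =
    (opCoproductIsoProduct X).hom ≫
      ((Limits.Pi.map fun j => (opShiftFunctorEquivalence C 1).counitIso.inv.app
        (Opposite.op (X j)) ≫ (f j).op⟦(1 : ℤ)⟧') ≫ inv (piComparison _ _)) := by
  rw [← cancel_mono (piComparison _ _)]
  refine Pi.hom_ext _ _ (fun j => ?_)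
  simp [← Functor.map_comp, ← op_comp, ← unop_comp]

noncomputable def coproductTriangle (T : J → Triangle C) [HasCoproduct fun j => (T j).obj₁]
    [HasCoproduct fun j => (T j).obj₂] [HasCoproduct fun j => (T j).obj₃] : Triangle C :=
  Triangle.mk (Limits.Sigma.map fun j => (T j).mor₁) (Limits.Sigma.map fun j => (T j).mor₂)
    (Sigma.desc fun j => (T j).mor₃ ≫ (Sigma.ι (fun i => (T i).obj₁) j)⟦(1 : ℤ)⟧')

noncomputable def triangleOpEquivalenceFunctorObjCoproductTriangleIso [HasCoproductsOfShape J C]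
    (T : J → Triangle C) :
    (triangleOpEquivalence C).functor.obj (Opposite.op (coproductTriangle T)) ≅
      productTriangle fun j => (triangleOpEquivalence C).functor.obj (Opposite.op (T j)) :=
  Triangle.isoMk _ _ (opCoproductIsoProduct fun j => (T j).obj₃)
    (opCoproductIsoProduct fun j => (T j).obj₂) (opCoproductIsoProduct fun j => (T j).obj₁)
    (Sigma.map_op_comp_opCoproductIsoProduct_hom fun j => (T j).mor₂)
    (Sigma.map_op_comp_opCoproductIsoProduct_hom fun j => (T j).mor₁)
    (sigmaDesc_comp_shift_ι_op_shift_comp_opCoproductIsoProduct_hom fun j => (T j).mor₃)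

variable [HasZeroObject C] [Preadditive C] [∀ n : ℤ, (shiftFunctor C n).Additive]
  [Pretriangulated C]

lemma distinguished_of_op_distinguished (T : Triangle C)
    (h : (triangleOpEquivalence C).functor.obj (Opposite.op T) ∈ distTriang Cᵒᵖ) :
    T ∈ distTriang C :=
  Pretriangulated.isomorphic_distinguished _ (unop_distinguished _ h) _
    ((triangleOpEquivalence C).unitIso.app (Opposite.op T)).unop.symm

lemma coproductTriangle_distinguished [HasCoproductsOfShape J C] (T : J → Triangle C)
    (hT : ∀ j, T j ∈ distTriang C) : coproductTriangle T ∈ distTriang C :=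
  distinguished_of_op_distinguished _ <| Pretriangulated.isomorphic_distinguished _
    (productTriangle_distinguished _ fun j => op_distinguished _ (hT j)) _
    (triangleOpEquivalenceFunctorObjCoproductTriangleIso T)

end

universe v u

variable (C : Type u) [Category.{v} C] [HasZeroObject C] [Preadditive C] [HasShift C ℤ]
  [∀ n : ℤ, (shiftFunctor C n).Additive] [Pretriangulated C]

theorem coproduct_of_distinguished
    (I : Type v) [HasCoproductsOfShape I C]
    (T : I → Triangle C) (hT : ∀ i, T i ∈ distTriang C) :
    Triangle.mk (Limits.Sigma.map fun i => (T i).mor₁) (Limits.Sigma.map fun i => (T i).mor₂)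
      (Sigma.desc fun i => (T i).mor₃ ≫
        (shiftFunctor C (1 : ℤ)).map (Sigma.ι (fun j => (T j).obj₁) i)) ∈ distTriang C :=
  coproductTriangle_distinguished T hT
end

section
/- Let C be a triangulated category closed under countable coproducts, and P ⊆ Ob C any class of objects. Then the smallest extension-closed class containing ∪_{i≥0} P[i] and closed under countable coproducts is Karoubian and Karoubi-closed in C; similarly for ∪_{i≤0} P[i]. -/
open CategoryTheory CategoryTheory.Limits CategoryTheory.Pretriangulated ZeroObject

universe v u

variable (C : Type u) [Category.{v} C] [HasZeroObject C] [Preadditive C] [HasShift C ℤ]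
  [∀ n : ℤ, (shiftFunctor C n).Additive] [Pretriangulated C]

/-- A class of objects is extension-closed if it contains `0`, is closed under isomorphisms,
and is closed under extensions (middle terms of distinguished triangles). -/
def ExtClosed (S : Set C) : Prop :=
  (0 : C) ∈ S ∧ (∀ ⦃X Y : C⦄, X ∈ S → Nonempty (X ≅ Y) → Y ∈ S) ∧
    ∀ T : Triangle C, (T ∈ distTriang C) → T.obj₁ ∈ S → T.obj₃ ∈ S → T.obj₂ ∈ S

/-- `StarClass C P Q` is the class `P ⋆ Q` of all extensions of elements of `Q` by elements
of `P`, i.e. objects `E` fitting in a distinguished triangle `P₁ → E → Q₁ → P₁[1]` with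
`P₁ ∈ P`, `Q₁ ∈ Q`. -/
def StarClass (P Q : Set C) : Set C :=
  {E | ∃ T : Triangle C, (T ∈ distTriang C) ∧ T.obj₁ ∈ P ∧ T.obj₃ ∈ Q ∧ Nonempty (T.obj₂ ≅ E)}

/-- A class of objects is closed under coproducts of fewer than `α` of its elements. -/
def SmashClosed (α : Cardinal.{v}) (S : Set C) : Prop :=
  ∀ (I : Type v), Cardinal.mk I < α → ∀ (f : I → C) [HasCoproduct f],
    (∀ i, f i ∈ S) → (∐ f) ∈ S

/-- The smallest strict extension-closed class containing `B` and closed under countable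
coproducts. -/
def CountClosure (B : Set C) : Set C :=
  ⋂₀ {S : Set C | B ⊆ S ∧ ExtClosed C S ∧
    ∀ (I : Type v) [Countable I] (f : I → C) [HasCoproduct f], (∀ i, f i ∈ S) → (∐ f) ∈ S}

/-!
If `s ≫ r = 𝟙 X` with `s : X ⟶ Z`, the cone triangle of the split mono `s` splits, so
`Z ≅ X ⊞ Y`. For `K = ∐_ℕ Z` the Eilenberg swindle `X ⊞ K ≅ K` puts `X ⊞ K` into the class.
The generators `⋃_{i ≥ 0} P[i]` are stable under `[1]` (and `⋃_{i ≤ 0} P[i]` under `[-1]`), hence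
so is the whole closure, and then `X` is an extension of `K[1]` by `X ⊞ K` (respectively of
`X ⊞ K` by `K[-1]`) via a rotation of the split triangle `K → K ⊞ X → X → K[1]`.
-/

universe w v₁ u₁

section CountClosure

variable {C} {B : Set C}

lemma subset_countClosure : B ⊆ CountClosure C B :=
  fun _ hb => Set.mem_sInter.2 fun _ hS => hS.1 hb

lemma countClosure_subset {S : Set C} (hBS : B ⊆ S) (hS : ExtClosed C S)
    (hσ : ∀ (I : Type v) [Countable I] (f : I → C) [HasCoproduct f],
      (∀ i, f i ∈ S) → (∐ f) ∈ S) :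
    CountClosure C B ⊆ S :=
  Set.sInter_subset_of_mem ⟨hBS, hS, hσ⟩

lemma zero_mem_countClosure : (0 : C) ∈ CountClosure C B :=
  Set.mem_sInter.2 fun _ hS => hS.2.1.1

lemma mem_countClosure_of_iso {X Y : C} (hX : X ∈ CountClosure C B) (e : X ≅ Y) :
    Y ∈ CountClosure C B :=
  Set.mem_sInter.2 fun S hS => hS.2.1.2.1 (Set.mem_sInter.1 hX S hS) ⟨e⟩

lemma mem_countClosure_of_distTriang (T : Triangle C) (hT : T ∈ distTriang C)
    (h₁ : T.obj₁ ∈ CountClosure C B) (h₃ : T.obj₃ ∈ CountClosure C B) :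
    T.obj₂ ∈ CountClosure C B :=
  Set.mem_sInter.2 fun S hS =>
    hS.2.1.2.2 T hT (Set.mem_sInter.1 h₁ S hS) (Set.mem_sInter.1 h₃ S hS)

lemma sigma_mem_countClosure {I : Type v} [Countable I] (f : I → C) [HasCoproduct f]
    (hf : ∀ i, f i ∈ CountClosure C B) : (∐ f) ∈ CountClosure C B :=
  Set.mem_sInter.2 fun S hS => hS.2.2 I f fun i => Set.mem_sInter.1 (hf i) S hS

lemma shift_mem_countClosure (hC : ∀ (I : Type v) [Countable I], HasCoproductsOfShape I C)
    {n : ℤ} (hB : ∀ b ∈ B, b⟦n⟧ ∈ B) {M : C} (hM : M ∈ CountClosure C B) :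
    M⟦n⟧ ∈ CountClosure C B := by
  refine countClosure_subset (S := fun M => M⟦n⟧ ∈ CountClosure C B)
    (fun b hb => subset_countClosure (hB b hb)) ⟨?_, ?_, ?_⟩ ?_ hM
  · exact mem_countClosure_of_iso zero_mem_countClosure (shiftFunctor C n).mapZeroObject.symm
  · rintro X Y hX ⟨e⟩
    exact mem_countClosure_of_iso hX ((shiftFunctor C n).mapIso e)
  · intro T hT h₁ h₃
    exact mem_countClosure_of_distTriang _ (Triangle.shift_distinguished T hT n) h₁ h₃
  · intro I _ f _ hf
    have := hC I
    exact mem_countClosure_of_iso (sigma_mem_countClosure _ hf)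
      (asIso (sigmaComparison (shiftFunctor C n) f))

end CountClosure

section Swindle

variable {D : Type u₁} [Category.{v₁} D]

noncomputable def sigmaCoprodIso [HasBinaryCoproducts D] {I : Type*} (f g : I → D)
    [HasCoproduct f] [HasCoproduct g] [HasCoproduct fun i => f i ⨿ g i] :
    (∐ fun i => f i ⨿ g i) ≅ (∐ f) ⨿ (∐ g) where
  hom := Sigma.desc fun i => coprod.map (Sigma.ι f i) (Sigma.ι g i)
  inv := coprod.desc (Sigma.desc fun i => coprod.inl ≫ Sigma.ι (fun i => f i ⨿ g i) i)
    (Sigma.desc fun i => coprod.inr ≫ Sigma.ι (fun i => f i ⨿ g i) i)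
  hom_inv_id := by
    ext i <;> simp only [Sigma.ι_desc, Sigma.ι_desc_assoc, coprod.inl_desc, coprod.inr_desc,
      coprod.inl_map_assoc, coprod.inr_map_assoc, Category.comp_id]
  inv_hom_id := by
    ext i <;> simp only [Sigma.ι_desc, Sigma.ι_desc_assoc, coprod.inl_desc_assoc,
      coprod.inr_desc_assoc, coprod.inl_map, coprod.inr_map, Category.assoc, Category.comp_id]

noncomputable def sigmaSumIso {I J : Type*} (f : I → D) (g : J → D)
    [HasCoproduct f] [HasCoproduct g] [HasCoproduct (Sum.elim f g)]
    [HasBinaryCoproduct (∐ f) (∐ g)] :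
    (∐ Sum.elim f g) ≅ (∐ f) ⨿ (∐ g) :=
  (colimit.isColimit _).coconePointUniqueUpToIso
    (Cofan.combPairIsColimit (coproductIsCoproduct f) (coproductIsCoproduct g)
      (coprodIsCoprod (∐ f) (∐ g)))

noncomputable def coprodSigmaConstIso [HasBinaryCoproducts D] {J : Type w}
    (e : PUnit.{w + 1} ⊕ J ≃ J) [HasCoproductsOfShape J D]
    [HasCoproductsOfShape (PUnit.{w + 1} ⊕ J) D] (X : D) :
    X ⨿ (∐ fun _ : J => X) ≅ ∐ fun _ : J => X :=
  coprod.mapIso (coproductUniqueIso fun _ : PUnit.{w + 1} => X).symm (Iso.refl _) ≪≫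
    (sigmaSumIso (fun _ : PUnit.{w + 1} => X) (fun _ : J => X)).symm ≪≫
    Sigma.whiskerEquiv e fun j => by rcases j with _ | _ <;> exact Iso.refl X

noncomputable def coprodSigmaConstIsoOfIsoCoprod [HasBinaryCoproducts D] {J : Type w}
    (e : PUnit.{w + 1} ⊕ J ≃ J) [HasCoproductsOfShape J D]
    [HasCoproductsOfShape (PUnit.{w + 1} ⊕ J) D] {X Y Z : D} (φ : Z ≅ X ⨿ Y) :
    X ⨿ (∐ fun _ : J => Z) ≅ ∐ fun _ : J => Z :=
  let ψ : (∐ fun _ : J => Z) ≅ (∐ fun _ : J => X) ⨿ (∐ fun _ : J => Y) :=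
    Sigma.mapIso (fun _ => φ) ≪≫ sigmaCoprodIso _ _
  coprod.mapIso (Iso.refl X) ψ ≪≫ (coprod.associator _ _ _).symm ≪≫
    coprod.mapIso (coprodSigmaConstIso e X) (Iso.refl _) ≪≫ ψ.symm

end Swindle

def punitSumULiftNatEquiv : PUnit.{w + 1} ⊕ ULift.{w} ℕ ≃ ULift.{w} ℕ :=
  (Equiv.sumComm _ _).trans <|
    (Equiv.sumCongr Equiv.ulift (Equiv.refl _)).trans <|
      Equiv.natSumPUnitEquivNat.trans Equiv.ulift.symm
section Retract

variable {C}

lemma exists_iso_biprod_of_retract {X Z : C} {s : X ⟶ Z} {r : Z ⟶ X} (hsr : s ≫ r = 𝟙 X) :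
    ∃ Y : C, Nonempty (Z ≅ X ⊞ Y) := by
  obtain ⟨Y, g, h, hT⟩ := distinguished_cocone_triangle s
  have : Mono s := mono_of_mono_fac hsr
  obtain ⟨e, -, -⟩ := exists_iso_binaryBiproduct_of_distTriang _ hT
    (Triangle.mor₃_eq_zero_of_mono₁ _ hT this)
  exact ⟨Y, ⟨e⟩⟩

lemma mem_countClosure_of_retract (hC : ∀ (I : Type v) [Countable I], HasCoproductsOfShape I C)
    {B : Set C} {n : ℤ} (hn : n = 1 ∨ n = -1) (hB : ∀ b ∈ B, b⟦n⟧ ∈ B) {X Z : C}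
    (hZ : Z ∈ CountClosure C B) {s : X ⟶ Z} {r : Z ⟶ X} (hsr : s ≫ r = 𝟙 X) :
    X ∈ CountClosure C B := by
  obtain ⟨Y, ⟨φ⟩⟩ := exists_iso_biprod_of_retract hsr
  have := hC (ULift.{v} ℕ)
  have := hC (PUnit.{v + 1} ⊕ ULift.{v} ℕ)
  let K := ∐ fun _ : ULift.{v} ℕ => Z
  have hK : K ∈ CountClosure C B := sigma_mem_countClosure _ fun _ => hZ
  have hXK : (X ⊞ K) ∈ CountClosure C B := mem_countClosure_of_iso hK <|
    (coprodSigmaConstIsoOfIsoCoprod punitSumULiftNatEquiv (φ ≪≫ biprod.isoCoprod X Y)).symm ≪≫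
      (biprod.isoCoprod X K).symm
  have hKn : K⟦n⟧ ∈ CountClosure C B := shift_mem_countClosure hC hB hK
  rcases hn with rfl | rfl
  · exact mem_countClosure_of_distTriang _
      (rot_of_distTriang _ (binaryBiproductTriangle_distinguished K X))
      (mem_countClosure_of_iso hXK (biprod.braiding X K)) hKn
  · exact mem_countClosure_of_distTriang _
      (inv_rot_of_distTriang _ (binaryBiproductTriangle_distinguished X K)) hKn hXK

end Retract

/-- Corollary `corokar`(2): for `C` closed under countable coproducts and any class `P`, the
classes `[∪_{i≥0} P[i]]` and `[∪_{i≤0} P[i]]` (smallest strict extension-closed classes closed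
under countable coproducts) are Karoubian and Karoubi-closed in `C`. -/
theorem countClosure_karoubiClosed
    (hC : ∀ (I : Type v) [Countable I], HasCoproductsOfShape I C) (P : Set C) :
    (∀ X Z : C, Z ∈ CountClosure C {W | ∃ X₀ ∈ P, ∃ i : ℕ, Nonempty (W ≅ X₀⟦(i : ℤ)⟧)} →
      (∃ (s : X ⟶ Z) (r : Z ⟶ X), s ≫ r = 𝟙 X) →
      X ∈ CountClosure C {W | ∃ X₀ ∈ P, ∃ i : ℕ, Nonempty (W ≅ X₀⟦(i : ℤ)⟧)}) ∧
    (∀ X Z : C, Z ∈ CountClosure C {W | ∃ X₀ ∈ P, ∃ i : ℕ, Nonempty (W ≅ X₀⟦(-(i : ℤ))⟧)} →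
      (∃ (s : X ⟶ Z) (r : Z ⟶ X), s ≫ r = 𝟙 X) →
      X ∈ CountClosure C {W | ∃ X₀ ∈ P, ∃ i : ℕ, Nonempty (W ≅ X₀⟦(-(i : ℤ))⟧)}) := by
  refine ⟨fun X Z hZ ⟨s, r, hsr⟩ => mem_countClosure_of_retract hC (.inl rfl) ?_ hZ hsr,
    fun X Z hZ ⟨s, r, hsr⟩ => mem_countClosure_of_retract hC (.inr rfl) ?_ hZ hsr⟩
  · rintro W ⟨X₀, hX₀, i, ⟨e⟩⟩
    exact ⟨X₀, hX₀, i + 1, ⟨(shiftFunctor C 1).mapIso e ≪≫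
      (shiftFunctorAdd' C _ 1 _ (by push_cast; ring)).symm.app X₀⟩⟩
  · rintro W ⟨X₀, hX₀, i, ⟨e⟩⟩
    exact ⟨X₀, hX₀, i + 1, ⟨(shiftFunctor C (-1)).mapIso e ≪≫
      (shiftFunctorAdd' C _ (-1) _ (by push_cast; ring)).symm.app X₀⟩⟩
end

section
/- Any triangulated category closed under countable coproducts is Karoubian (idempotent complete). -/
open CategoryTheory CategoryTheory.Limits CategoryTheory.Pretriangulated ZeroObject

universe v u

variable (C : Type u) [Category.{v} C] [HasZeroObject C] [Preadditive C] [HasShift C ℤ]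
  [∀ n : ℤ, (shiftFunctor C n).Additive] [Pretriangulated C]

/-!
An idempotent `e` on `X` is split by the colimit of the sequence `X →e X →e ⋯`, which is the
cokernel of `1 - s` on `∐ₙ X`, where `s` sends the `n`-th summand to the `(n+1)`-th by `e`.
The map `1 - s` is a split monomorphism, and in a pretriangulated category every monomorphism
has a cokernel, namely the third vertex of the distinguished triangle it spans.
-/

namespace CategoryTheory.Telescope

variable {D : Type*} [Category* D] {X : D} (e : X ⟶ X) [HasCoproduct fun _ : ℕ => X]

noncomputable def shift : ∐ (fun _ : ℕ => X) ⟶ ∐ (fun _ : ℕ => X) :=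
  Limits.Sigma.desc fun n => e ≫ Sigma.ι (fun _ : ℕ => X) (n + 1)

@[simp]
lemma ι_shift (n : ℕ) : Sigma.ι _ n ≫ shift e = e ≫ Sigma.ι (fun _ : ℕ => X) (n + 1) :=
  Limits.Sigma.ι_desc _ _

variable [Preadditive D]

-- A left inverse of `1 - shift e`: the shift vanishes on the image of `1 - e`, and on the
-- image of `e` the partial sums telescope.
noncomputable def retraction : ∐ (fun _ : ℕ => X) ⟶ ∐ (fun _ : ℕ => X) :=
  Limits.Sigma.desc fun n => (𝟙 X - e) ≫ Sigma.ι (fun _ : ℕ => X) n -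
    ∑ k ∈ Finset.range n, e ≫ Sigma.ι (fun _ : ℕ => X) k

lemma ι_retraction (n : ℕ) :
    Sigma.ι _ n ≫ retraction e = (𝟙 X - e) ≫ Sigma.ι (fun _ : ℕ => X) n -
      ∑ k ∈ Finset.range n, e ≫ Sigma.ι (fun _ : ℕ => X) k :=
  Limits.Sigma.ι_desc _ _

variable {e}

lemma one_sub_shift_comp_retraction (he : e ≫ e = e) :
    (𝟙 _ - shift e) ≫ retraction e = 𝟙 _ := by
  refine Sigma.hom_ext _ _ fun n => ?_
  rw [Preadditive.sub_comp, Category.id_comp, Preadditive.comp_sub, reassoc_of% ι_shift e n,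
    ι_retraction, ι_retraction, Finset.sum_range_succ]
  simp only [Preadditive.comp_sub, Preadditive.sub_comp, Preadditive.comp_add,
    Preadditive.comp_sum, ← Category.assoc, he, Category.comp_id, Category.id_comp]
  abel

lemma isSplitMono_one_sub_shift (he : e ≫ e = e) : IsSplitMono (𝟙 _ - shift e) :=
  .mk' ⟨retraction e, one_sub_shift_comp_retraction he⟩

section Cokernel

variable [HasCokernel (𝟙 _ - shift e)]

lemma shift_comp_cokernelπ :
    shift e ≫ cokernel.π (𝟙 _ - shift e) = cokernel.π (𝟙 _ - shift e) := by
  have := cokernel.condition (𝟙 _ - shift e)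
  rwa [Preadditive.sub_comp, Category.id_comp, sub_eq_zero, eq_comm] at this

lemma ι_comp_cokernelπ_eq_succ (n : ℕ) :
    Sigma.ι (fun _ : ℕ => X) n ≫ cokernel.π (𝟙 _ - shift e) =
      e ≫ Sigma.ι (fun _ : ℕ => X) (n + 1) ≫ cokernel.π (𝟙 _ - shift e) := by
  rw [← reassoc_of% ι_shift e n, shift_comp_cokernelπ]

lemma e_comp_ι_comp_cokernelπ (he : e ≫ e = e) (n : ℕ) :
    e ≫ Sigma.ι (fun _ : ℕ => X) n ≫ cokernel.π (𝟙 _ - shift e) =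
      Sigma.ι (fun _ : ℕ => X) n ≫ cokernel.π (𝟙 _ - shift e) := by
  rw [ι_comp_cokernelπ_eq_succ, reassoc_of% he]

lemma ι_comp_cokernelπ (he : e ≫ e = e) (n : ℕ) :
    Sigma.ι (fun _ : ℕ => X) n ≫ cokernel.π (𝟙 _ - shift e) =
      Sigma.ι (fun _ : ℕ => X) 0 ≫ cokernel.π (𝟙 _ - shift e) := by
  induction n with
  | zero => rfl
  | succ n ih =>
    rw [← ih, ← e_comp_ι_comp_cokernelπ he (n + 1), ← ι_comp_cokernelπ_eq_succ]

theorem exists_split_of_hasCokernel (he : e ≫ e = e) :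
    ∃ (Y : D) (i : Y ⟶ X) (p : X ⟶ Y), i ≫ p = 𝟙 Y ∧ p ≫ i = e := by
  have hσ : (𝟙 _ - shift e) ≫ Limits.Sigma.desc (fun _ : ℕ => e) = 0 := by
    refine Sigma.hom_ext _ _ fun n => ?_
    simp [Preadditive.comp_sub, reassoc_of% ι_shift e n, he]
  refine ⟨cokernel (𝟙 _ - shift e), cokernel.desc _ _ hσ,
    Sigma.ι (fun _ : ℕ => X) 0 ≫ cokernel.π (𝟙 _ - shift e), ?_, by simp⟩
  rw [← cancel_epi (cokernel.π _)]
  refine Sigma.hom_ext _ _ fun n => ?_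
  simp [e_comp_ι_comp_cokernelπ he, ι_comp_cokernelπ he n]

end Cokernel

end CategoryTheory.Telescope

namespace CategoryTheory.Pretriangulated

variable {C}

noncomputable def isColimitCokernelCoforkOfMono₁ (T : Triangle C)
    (hT : T ∈ distTriang C) [Mono T.mor₁] :
    IsColimit (CokernelCofork.ofπ T.mor₂ (comp_distTriang_mor_zero₁₂ T hT)) :=
  have := T.epi₂ hT (T.mor₃_eq_zero_of_mono₁ hT inferInstance)
  CokernelCofork.IsColimit.ofπ' _ _ fun k hk =>
    ⟨(T.yoneda_exact₂ hT k hk).choose, (T.yoneda_exact₂ hT k hk).choose_spec.symm⟩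

lemma hasCokernel_of_mono {A B : C} (f : A ⟶ B) [Mono f] : HasCokernel f := by
  obtain ⟨_, p, δ, hT⟩ := distinguished_cocone_triangle f
  have : Mono (Triangle.mk f p δ).mor₁ := ‹Mono f›
  exact ⟨_, isColimitCokernelCoforkOfMono₁ _ hT⟩

end CategoryTheory.Pretriangulated

/-- Any triangulated category closed under countable coproducts is Karoubian
(idempotent complete). -/
theorem idempotentComplete_of_countable_coproducts
    (hC : ∀ (I : Type v) [Countable I], HasCoproductsOfShape I C) :
    IsIdempotentComplete C := by
  have := hC (ULift.{v} ℕ)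
  have : HasCoproductsOfShape ℕ C :=
    hasColimitsOfShape_of_equivalence (Discrete.equivalence Equiv.ulift)
  refine ⟨fun X e he => ?_⟩
  have := Telescope.isSplitMono_one_sub_shift he
  have := hasCokernel_of_mono (𝟙 _ - Telescope.shift e)
  exact Telescope.exists_split_of_hasCokernel he
end

section
/- Let w be a weight structure on a triangulated category C. Then C_{w≥0} equals the right orthogonal of C_{w≤-1}, i.e., C_{w≥0} = {N : Hom(M, N) = 0 for all M ∈ C_{w≤0}[-1]}, and dually C_{w≤0} = {M : Hom(M, N) = 0 for all N ∈ C_{w≥0}[1]}. -/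
open CategoryTheory CategoryTheory.Limits CategoryTheory.Pretriangulated ZeroObject

universe v u

variable (C : Type u) [Category.{v} C] [HasZeroObject C] [Preadditive C] [HasShift C ℤ]
  [∀ n : ℤ, (shiftFunctor C n).Additive] [Pretriangulated C]

/-- A weight structure on a pretriangulated category `C`, given by the two classes
`le = C_{w≤0}` and `ge = C_{w≥0}` of objects. -/
structure WeightStructure where
  le : Set C
  ge : Set C
  le_retract : ∀ ⦃X Y : C⦄, Y ∈ le → (∃ (s : X ⟶ Y) (r : Y ⟶ X), s ≫ r = 𝟙 X) → X ∈ le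
  ge_retract : ∀ ⦃X Y : C⦄, Y ∈ ge → (∃ (s : X ⟶ Y) (r : Y ⟶ X), s ≫ r = 𝟙 X) → X ∈ ge
  le_shift : ∀ ⦃X : C⦄, X ∈ le → X⟦(-1 : ℤ)⟧ ∈ le
  ge_shift : ∀ ⦃X : C⦄, X ∈ ge → X⟦(1 : ℤ)⟧ ∈ ge
  orth : ∀ ⦃X Y : C⦄, X ∈ le → Y ∈ ge → ∀ f : X ⟶ Y⟦(1 : ℤ)⟧, f = 0
  wd : ∀ M : C, ∃ (L R : C) (f : L ⟶ M) (g : M ⟶ R⟦(1 : ℤ)⟧) (h : R⟦(1 : ℤ)⟧ ⟶ L⟦(1 : ℤ)⟧),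
    L ∈ le ∧ R ∈ ge ∧ Triangle.mk f g h ∈ distTriang C

/-
Both inclusions `⊆` are orthogonality, moved across the shift. For `⊇`, take a weight
decomposition: orthogonality to the appropriate class kills one morphism of the distinguished
triangle, and a distinguished triangle with a zero morphism splits, so the object is a retract
of a member of the class, which is closed under retracts.
-/

namespace CategoryTheory.Pretriangulated

variable {C} {T : Triangle C}

noncomputable def retractObj₁OfMor₂EqZero (hT : T ∈ distTriang C) (h : T.mor₂ = 0) :
    Retract T.obj₂ T.obj₁ :=
  have exists_section := T.coyoneda_exact₂ hT (𝟙 T.obj₂) (by rw [Category.id_comp, h])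
  { i := exists_section.choose, r := T.mor₁, retract := exists_section.choose_spec.symm }

noncomputable def retractObj₃OfMor₁EqZero (hT : T ∈ distTriang C) (h : T.mor₁ = 0) :
    Retract T.obj₂ T.obj₃ :=
  have exists_retraction := T.yoneda_exact₂ hT (𝟙 T.obj₂) (by rw [Category.comp_id, h])
  { i := T.mor₂, r := exists_retraction.choose, retract := exists_retraction.choose_spec.symm }

end CategoryTheory.Pretriangulated

namespace WeightStructure

variable {C} (w : WeightStructure C) {M N : C}

lemma le_of_retract (e : Retract M N) (hN : N ∈ w.le) : M ∈ w.le :=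
  w.le_retract hN ⟨e.i, e.r, e.retract⟩

lemma ge_of_retract (e : Retract M N) (hN : N ∈ w.ge) : M ∈ w.ge :=
  w.ge_retract hN ⟨e.i, e.r, e.retract⟩

lemma shift_one_shift_neg_one_mem_ge (hN : N ∈ w.ge) : N⟦(1 : ℤ)⟧⟦(-1 : ℤ)⟧ ∈ w.ge :=
  w.ge_of_retract (.ofIso (shiftShiftNeg N (1 : ℤ))) hN

lemma eq_zero_of_shift_mem_le_of_mem_ge (hM : M⟦(1 : ℤ)⟧ ∈ w.le) (hN : N ∈ w.ge)
    (f : M ⟶ N) : f = 0 :=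
  (shiftFunctor C (1 : ℤ)).map_injective (by rw [Functor.map_zero]; exact w.orth hM hN _)

lemma eq_zero_of_mem_le_of_shift_mem_ge (hM : M ∈ w.le) (hN : N⟦(-1 : ℤ)⟧ ∈ w.ge)
    (f : M ⟶ N) : f = 0 := by
  rw [← cancel_mono (shiftNegShift N (1 : ℤ)).inv, zero_comp]
  exact w.orth hM hN _

lemma mem_le_of_forall_eq_zero (hM : ∀ ⦃N : C⦄, N⟦(-1 : ℤ)⟧ ∈ w.ge → ∀ f : M ⟶ N, f = 0) :
    M ∈ w.le := by
  obtain ⟨L, R, f, g, h, hL, hR, hT⟩ := w.wd M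
  have hg : g = 0 := hM (w.shift_one_shift_neg_one_mem_ge hR) g
  exact w.le_of_retract (retractObj₁OfMor₂EqZero hT hg) hL

/-- The weight decomposition of `N⟦1⟧` shifted by `-1` has first term `L⟦-1⟧ ∈ C_{w≤-1}`. -/
lemma mem_ge_of_forall_eq_zero (hN : ∀ ⦃M : C⦄, M⟦(1 : ℤ)⟧ ∈ w.le → ∀ f : M ⟶ N, f = 0) :
    N ∈ w.ge := by
  obtain ⟨L, R, f, g, h, hL, hR, hT⟩ := w.wd (N⟦(1 : ℤ)⟧)
  let T := (Triangle.shiftFunctor C (-1 : ℤ)).obj (Triangle.mk f g h)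
  have hT' : T ∈ distTriang C := Triangle.shift_distinguished _ hT _
  let eN := shiftShiftNeg N (1 : ℤ)
  have hL' : L⟦(-1 : ℤ)⟧⟦(1 : ℤ)⟧ ∈ w.le :=
    w.le_of_retract (.ofIso (shiftNegShift L (1 : ℤ))) hL
  have hmor₁ : T.mor₁ = 0 := (cancel_mono eN.hom).1 ((hN hL' _).trans zero_comp.symm)
  exact w.ge_of_retract ((Retract.ofIso eN.symm).trans (retractObj₃OfMor₁EqZero hT' hmor₁))
    (w.shift_one_shift_neg_one_mem_ge hR)

end WeightStructure

/-- `C_{w≥0} = (C_{w≤-1})^⊥` and `C_{w≤0} = ^⊥(C_{w≥1})`. -/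
theorem weightStructure_orthogonality_characterization (w : WeightStructure C) :
    (w.ge = {N : C | ∀ ⦃M : C⦄, M⟦(1 : ℤ)⟧ ∈ w.le → ∀ f : M ⟶ N, f = 0}) ∧
    (w.le = {M : C | ∀ ⦃N : C⦄, N⟦(-1 : ℤ)⟧ ∈ w.ge → ∀ f : M ⟶ N, f = 0}) := by
  refine ⟨Set.ext fun N => ⟨?_, w.mem_ge_of_forall_eq_zero⟩,
    Set.ext fun M => ⟨?_, w.mem_le_of_forall_eq_zero⟩⟩
  · exact fun hN _ hM => w.eq_zero_of_shift_mem_le_of_mem_ge hM hN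
  · exact fun hM _ hN => w.eq_zero_of_mem_le_of_shift_mem_ge hM hN
end

section
/- Let w, v be weight structures on the same triangulated category C such that C_{w≤0} ⊆ C_{v≤0} and C_{w≥0} ⊆ C_{v≥0}. Then w = v, i.e., both inclusions are equalities. -/
open CategoryTheory CategoryTheory.Limits CategoryTheory.Pretriangulated ZeroObject

universe v u

variable (C : Type u) [Category.{v} C] [HasZeroObject C] [Preadditive C] [HasShift C ℤ]
  [∀ n : ℤ, (shiftFunctor C n).Additive] [Pretriangulated C]

/-!
Let `L → M → R⟦1⟧ → L⟦1⟧` be a `w`-weight decomposition. If `M ∈ C_{v≤0}`, the map `M → R⟦1⟧`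
vanishes by `v`-orthogonality (as `R ∈ C_{w≥0} ⊆ C_{v≥0}`), so `M` is a retract of `L ∈ C_{w≤0}`.
Dually, if `M ∈ C_{v≥0}`, decompose `M⟦1⟧` instead: the map `L → M⟦1⟧` vanishes, so `M⟦1⟧` is a
retract of `R⟦1⟧`, hence `M` is a retract of `R ∈ C_{w≥0}`.
-/

theorem CategoryTheory.Functor.isSplitMono_preimage {D E : Type*} [Category D] [Category E]
    (F : D ⥤ E) [F.Full] [F.Faithful] {X Y : D} (f : F.obj X ⟶ F.obj Y) [IsSplitMono f] :
    IsSplitMono (F.preimage f) :=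
  IsSplitMono.mk'
    { retraction := F.preimage (retraction f)
      id := F.map_injective (by simp) }

namespace CategoryTheory.Pretriangulated

variable {C}

theorem isSplitEpi_mor₁_of_mor₂_eq_zero (T : Triangle C) (hT : T ∈ distTriang C)
    (h : T.mor₂ = 0) : IsSplitEpi T.mor₁ := by
  obtain ⟨s, hs⟩ := T.coyoneda_exact₂ hT (𝟙 T.obj₂) (by rw [h, comp_zero])
  exact IsSplitEpi.mk' ⟨s, hs.symm⟩

theorem isSplitMono_mor₂_of_mor₁_eq_zero (T : Triangle C) (hT : T ∈ distTriang C)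
    (h : T.mor₁ = 0) : IsSplitMono T.mor₂ := by
  obtain ⟨r, hr⟩ := T.yoneda_exact₂ hT (𝟙 T.obj₂) (by rw [h, zero_comp])
  exact IsSplitMono.mk' ⟨r, hr.symm⟩

end CategoryTheory.Pretriangulated

namespace WeightStructure

variable {C}

theorem mem_le_of_isSplitEpi (u : WeightStructure C) {X Y : C} (f : X ⟶ Y) [IsSplitEpi f]
    (hX : X ∈ u.le) : Y ∈ u.le :=
  u.le_retract hX ⟨section_ f, f, IsSplitEpi.id f⟩

theorem mem_ge_of_isSplitMono (u : WeightStructure C) {X Y : C} (f : X ⟶ Y) [IsSplitMono f]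
    (hY : Y ∈ u.ge) : X ∈ u.ge :=
  u.ge_retract hY ⟨f, retraction f, IsSplitMono.id f⟩

theorem le_subset_of_ge_subset (w v : WeightStructure C) (hge : w.ge ⊆ v.ge) :
    v.le ⊆ w.le := by
  intro M hM
  obtain ⟨L, R, f, g, h, hL, hR, hT⟩ := w.wd M
  have : IsSplitEpi f := isSplitEpi_mor₁_of_mor₂_eq_zero _ hT (v.orth hM (hge hR) g)
  exact w.mem_le_of_isSplitEpi f hL

theorem ge_subset_of_le_subset (w v : WeightStructure C) (hle : w.le ⊆ v.le) :
    v.ge ⊆ w.ge := by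
  intro M hM
  obtain ⟨L, R, f, g, h, hL, hR, hT⟩ := w.wd (M⟦(1 : ℤ)⟧)
  have : IsSplitMono g := isSplitMono_mor₂_of_mor₁_eq_zero _ hT (v.orth (hle hL) hM f)
  have := (shiftFunctor C (1 : ℤ)).isSplitMono_preimage g
  exact w.mem_ge_of_isSplitMono ((shiftFunctor C (1 : ℤ)).preimage g) hR

end WeightStructure

/-- Two weight structures with `C_{w≤0} ⊆ C_{v≤0}` and `C_{w≥0} ⊆ C_{v≥0}` coincide. -/
theorem weightStructure_unique (w v : WeightStructure C)
    (hle : w.le ⊆ v.le) (hge : w.ge ⊆ v.ge) : w.le = v.le ∧ w.ge = v.ge :=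
  ⟨Set.Subset.antisymm hle (w.le_subset_of_ge_subset v hge),
    Set.Subset.antisymm hge (w.ge_subset_of_le_subset v hle)⟩
end

section
/- Let w be a weight structure on C, and let m < n be integers. Given an m-weight decomposition of M and an n-weight decomposition of M', any morphism g : M → M' extends to a morphism of the corresponding distinguished triangles, and this extension is unique. -/
/-!
Write `T = (A → M → B → A[1])` and `T' = (A' → M' → B' → A'[1])`. Weight orthogonality,
together with `A ∈ C_{w≤m}` and `B' ∈ C_{w≥n+1}`, kills every morphism `A → B'`, `A → B'[-1]`
and `A[1] → B'`, since `m < n` leaves room for each of these shifts. The first vanishing lets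
`g` be lifted along `A' → M'` and then completed to a morphism of triangles; the other two
make the lift and the completion unique: two lifts differ by a morphism factoring through
`B'[-1] → A'`, and two completions by one factoring through `B → A[1]`.
-/

open CategoryTheory CategoryTheory.Limits CategoryTheory.Pretriangulated ZeroObject

universe v u

variable (C : Type u) [Category.{v} C] [HasZeroObject C] [Preadditive C] [HasShift C ℤ]
  [∀ n : ℤ, (shiftFunctor C n).Additive] [Pretriangulated C]

variable {C}

namespace CategoryTheory.Pretriangulated

lemma eq_of_comp_mor₁_eq {T : Triangle C} (hT : T ∈ distTriang C) {X : C}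
    (hX : ∀ f : X ⟶ T.obj₃⟦(-1 : ℤ)⟧, f = 0) {u v : X ⟶ T.obj₁}
    (huv : u ≫ T.mor₁ = v ≫ T.mor₁) : u = v := by
  obtain ⟨t, ht⟩ := Triangle.coyoneda_exact₂ _ (inv_rot_of_distTriang _ hT) (u - v)
    (show (u - v) ≫ T.mor₁ = 0 by rw [Preadditive.sub_comp, huv, sub_self])
  rw [hX t] at ht
  exact sub_eq_zero.1 (ht.trans zero_comp)

lemma eq_of_mor₂_comp_eq {T : Triangle C} (hT : T ∈ distTriang C) {Y : C}
    (hY : ∀ f : T.obj₁⟦(1 : ℤ)⟧ ⟶ Y, f = 0) {u v : T.obj₃ ⟶ Y}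
    (huv : T.mor₂ ≫ u = T.mor₂ ≫ v) : u = v := by
  obtain ⟨t, ht⟩ := Triangle.yoneda_exact₃ _ hT (u - v)
    (by rw [Preadditive.comp_sub, huv, sub_self])
  rw [hY t, comp_zero] at ht
  exact sub_eq_zero.1 ht

lemma existsUnique_triangle_morphism_extending {T T' : Triangle C} (hT : T ∈ distTriang C)
    (hT' : T' ∈ distTriang C) (g : T.obj₂ ⟶ T'.obj₂)
    (h₀ : ∀ f : T.obj₁ ⟶ T'.obj₃, f = 0)
    (hneg : ∀ f : T.obj₁ ⟶ T'.obj₃⟦(-1 : ℤ)⟧, f = 0)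
    (hpos : ∀ f : T.obj₁⟦(1 : ℤ)⟧ ⟶ T'.obj₃, f = 0) :
    ∃! p : (T.obj₁ ⟶ T'.obj₁) × (T.obj₃ ⟶ T'.obj₃),
      p.1 ≫ T'.mor₁ = T.mor₁ ≫ g ∧ T.mor₂ ≫ p.2 = g ≫ T'.mor₂ ∧
        p.2 ≫ T'.mor₃ = T.mor₃ ≫ p.1⟦(1 : ℤ)⟧' := by
  obtain ⟨h, hh⟩ := Triangle.coyoneda_exact₂ _ hT' (T.mor₁ ≫ g) (h₀ _)
  obtain ⟨j, hj₂, hj₃⟩ := complete_distinguished_triangle_morphism _ _ hT hT' h g hh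
  refine ⟨(h, j), ⟨hh.symm, hj₂, hj₃.symm⟩, ?_⟩
  rintro ⟨h', j'⟩ ⟨e₁, e₂, -⟩
  exact Prod.ext (eq_of_comp_mor₁_eq hT' hneg (e₁.trans hh))
    (eq_of_mor₂_comp_eq hT hpos (e₂.trans hj₂.symm))

end CategoryTheory.Pretriangulated

namespace WeightStructure

variable (w : WeightStructure C)

lemma le_of_iso {X Y : C} (e : X ≅ Y) (hY : Y ∈ w.le) : X ∈ w.le :=
  w.le_retract hY ⟨e.hom, e.inv, e.hom_inv_id⟩

lemma ge_of_iso {X Y : C} (e : X ≅ Y) (hY : Y ∈ w.ge) : X ∈ w.ge :=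
  w.ge_retract hY ⟨e.hom, e.inv, e.hom_inv_id⟩

lemma shift_natCast_mem_ge {Y : C} (hY : Y ∈ w.ge) (j : ℕ) : Y⟦(j : ℤ)⟧ ∈ w.ge := by
  induction j with
  | zero => exact w.ge_of_iso ((shiftFunctorZero C ℤ).app Y) hY
  | succ k ih =>
    exact w.ge_of_iso ((shiftFunctorAdd' C (k : ℤ) 1 (k + 1) rfl).app Y) (w.ge_shift ih)

lemma hom_to_shift_eq_zero {X Y : C} (hX : X ∈ w.le) (hY : Y ∈ w.ge) {k : ℤ} (hk : 1 ≤ k)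
    (f : X ⟶ Y⟦k⟧) : f = 0 := by
  let e : Y⟦k⟧ ≅ Y⟦((k - 1).toNat : ℤ)⟧⟦(1 : ℤ)⟧ :=
    (shiftFunctorAdd' C ((k - 1).toNat : ℤ) 1 k (by omega)).app Y
  rw [← Preadditive.IsIso.comp_right_eq_zero f e.hom]
  exact w.orth hX (w.shift_natCast_mem_ge hY _) _

lemma hom_eq_zero_of_lt {X Y : C} {p q : ℤ} (hpq : p < q) (hX : X⟦-p⟧ ∈ w.le)
    (hY : Y⟦-q⟧ ∈ w.ge) (f : X ⟶ Y) : f = 0 := by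
  let e : Y⟦-p⟧ ≅ Y⟦-q⟧⟦q - p⟧ := (shiftFunctorAdd' C (-q) (q - p) (-p) (by ring)).app Y
  rw [← Functor.map_eq_zero_iff (shiftFunctor C (-p)),
    ← Preadditive.IsIso.comp_right_eq_zero _ e.hom]
  exact w.hom_to_shift_eq_zero hX hY (by omega) _

end WeightStructure

variable (C)

theorem unique_morphism_of_weight_decompositions (w : WeightStructure C)
    (m n : ℤ) (hmn : m < n) (M M' A B A' B' : C)
    (a : A ⟶ M) (b : M ⟶ B) (c : B ⟶ A⟦(1 : ℤ)⟧)
    (hT : Triangle.mk a b c ∈ distTriang C)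
    (hA : A⟦(-m : ℤ)⟧ ∈ w.le)
    (a' : A' ⟶ M') (b' : M' ⟶ B') (c' : B' ⟶ A'⟦(1 : ℤ)⟧)
    (hT' : Triangle.mk a' b' c' ∈ distTriang C)
    (hB' : B'⟦(-(n + 1) : ℤ)⟧ ∈ w.ge)
    (g : M ⟶ M') :
    ∃! p : (A ⟶ A') × (B ⟶ B'),
      p.1 ≫ a' = a ≫ g ∧ b ≫ p.2 = g ≫ b' ∧
        p.2 ≫ c' = c ≫ (shiftFunctor C (1 : ℤ)).map p.1 := by
  have hB'neg : B'⟦(-1 : ℤ)⟧⟦-n⟧ ∈ w.ge :=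
    w.ge_of_iso ((shiftFunctorAdd' C (-1) (-n) (-(n + 1)) (by ring)).app B').symm hB'
  have hApos : A⟦(1 : ℤ)⟧⟦-(m + 1)⟧ ∈ w.le :=
    w.le_of_iso ((shiftFunctorAdd' C 1 (-(m + 1)) (-m) (by ring)).app A).symm hA
  exact existsUnique_triangle_morphism_extending hT hT' g
    (w.hom_eq_zero_of_lt (by omega) hA hB')
    (w.hom_eq_zero_of_lt hmn hA hB'neg)
    (w.hom_eq_zero_of_lt (by omega) hApos hB')
end

section
/- Let C' ⊆ C be a full triangulated subcategory, and suppose C carries a weight structure w and C' carries a weight structure w'. Then the inclusion C' → C is weight-exact if and only if w restricts to C' and w' = (C_{w≤0} ∩ Ob C', C_{w≥0} ∩ Ob C'). -/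
/-!
A weight structure is determined by either half: `C_{w≤0}` consists of the objects with no
nonzero maps to `C_{w≥1}`, and `C_{w≥0}` of those receiving no nonzero maps from `C_{w≤-1}`
(the weight decomposition of such an object splits, exhibiting it as a retract of an object
of the class). If the inclusion is weight-exact and `ι X ∈ C_{w≤0}`, every map from `X` to
`C'_{w'≥1}` becomes, after `ι`, a map into `C_{w≥1}`, hence vanishes; faithfulness of `ι`
then puts `X` in `C'_{w'≤0}`. Dually for `C'_{w'≥0}`.
-/

open CategoryTheory CategoryTheory.Limits CategoryTheory.Pretriangulated ZeroObject

universe v u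

variable (C : Type u) [Category.{v} C] [HasZeroObject C] [Preadditive C] [HasShift C ℤ]
  [∀ n : ℤ, (shiftFunctor C n).Additive] [Pretriangulated C]

variable {C' : Type u} [Category.{v} C'] [HasZeroObject C'] [Preadditive C'] [HasShift C' ℤ]
  [∀ n : ℤ, (shiftFunctor C' n).Additive] [Pretriangulated C']

lemma CategoryTheory.Functor.exists_retract_of_map {D E : Type*} [Category D] [Category E]
    (F : D ⥤ E) [F.Full] [F.Faithful] {X Y : D} (s : F.obj X ⟶ F.obj Y) (r : F.obj Y ⟶ F.obj X)
    (hsr : s ≫ r = 𝟙 _) : ∃ (s' : X ⟶ Y) (r' : Y ⟶ X), s' ≫ r' = 𝟙 X :=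
  ⟨F.preimage s, F.preimage r, F.map_injective (by simp [hsr])⟩

lemma CategoryTheory.Functor.eq_zero_of_forall_hom_shift_eq_zero {D E : Type*} [Category D]
    [Category E] [HasZeroMorphisms D] [HasZeroMorphisms E] [HasShift D ℤ] [HasShift E ℤ] (F : D ⥤ E)
    [F.CommShift ℤ] [F.PreservesZeroMorphisms] [F.Faithful] {n : ℤ} {X Y : D}
    (h : ∀ g : F.obj X ⟶ (F.obj Y)⟦n⟧, g = 0) (f : X ⟶ Y⟦n⟧) : f = 0 := by
  apply F.map_injective
  rw [F.map_zero, ← cancel_mono ((F.commShiftIso n).hom.app Y), zero_comp]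
  exact h _

namespace WeightStructure

variable {C} (w : WeightStructure C)

lemma mem_le_iff_forall_eq_zero (X : C) :
    X ∈ w.le ↔ ∀ ⦃Y : C⦄, Y ∈ w.ge → ∀ f : X ⟶ Y⟦(1 : ℤ)⟧, f = 0 := by
  refine ⟨fun hX _ hY => w.orth hX hY, fun h => ?_⟩
  obtain ⟨L, R, f, g, _, hL, hR, hT⟩ := w.wd X
  have : Epi f := Triangle.epi₁ _ hT (h hR g)
  have := isSplitEpi_of_epi f
  exact w.le_retract hL ⟨section_ f, f, IsSplitEpi.id f⟩

lemma mem_ge_iff_forall_eq_zero (X : C) :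
    X ∈ w.ge ↔ ∀ ⦃Y : C⦄, Y ∈ w.le → ∀ f : Y ⟶ X⟦(1 : ℤ)⟧, f = 0 := by
  refine ⟨fun hX _ hY => w.orth hY hX, fun h => ?_⟩
  obtain ⟨L, R, f, g, _, hL, hR, hT⟩ := w.wd (X⟦(1 : ℤ)⟧)
  have : Mono g := Triangle.mono₂ _ hT (h hL f)
  have := isSplitMono_of_mono g
  exact w.ge_retract hR
    ((shiftFunctor C (1 : ℤ)).exists_retract_of_map g (retraction g) (IsSplitMono.id g))

end WeightStructure

theorem inclusion_weightExact_iff_restriction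
    (ι : C' ⥤ C) [ι.CommShift ℤ] [ι.Full] [ι.Faithful]
    (w : WeightStructure C) (w' : WeightStructure C') :
    ((∀ X ∈ w'.le, ι.obj X ∈ w.le) ∧ (∀ X ∈ w'.ge, ι.obj X ∈ w.ge)) ↔
      (w'.le = {X : C' | ι.obj X ∈ w.le} ∧ w'.ge = {X : C' | ι.obj X ∈ w.ge}) := by
  constructor
  · rintro ⟨hle, hge⟩
    refine ⟨Set.Subset.antisymm hle fun X hX => ?_, Set.Subset.antisymm hge fun X hX => ?_⟩
    · refine (w'.mem_le_iff_forall_eq_zero X).2 fun Y hY => ?_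
      exact ι.eq_zero_of_forall_hom_shift_eq_zero (w.orth hX (hge Y hY))
    · refine (w'.mem_ge_iff_forall_eq_zero X).2 fun Y hY => ?_
      exact ι.eq_zero_of_forall_hom_shift_eq_zero (w.orth (hle Y hY) hX)
  · rintro ⟨hle, hge⟩
    exact ⟨hle.subset, hge.subset⟩
end

section
/- Let w be a weight structure on C that is α-generated by a class P (i.e., C_{w≥0} = [∪_{i≥0}P[i]]^α and C_{w≤0} = [∪_{i≤0}P[i]]^α). Then w is left non-degenerate (any object lying in C_{w≥n} for all n is zero) and w is generated by P, i.e., C_{w≥0} = {N : Hom(P[i], N) = 0 for all P ∈ P, i < 0}. -/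
open CategoryTheory CategoryTheory.Limits CategoryTheory.Pretriangulated ZeroObject

universe v u

variable (C : Type u) [Category.{v} C] [HasZeroObject C] [Preadditive C] [HasShift C ℤ]
  [∀ n : ℤ, (shiftFunctor C n).Additive] [Pretriangulated C]

/-- A class of objects closed under coproducts of fewer than `α` of its elements. -/
def AlphaSmashClosed (α : Cardinal.{v}) (S : Set C) : Prop :=
  ∀ (I : Type v), Cardinal.mk I < α → ∀ (f : I → C) [HasCoproduct f],
    (∀ i, f i ∈ S) → (∐ f) ∈ S

/-- `[B]^α`: the smallest strict extension-closed class of objects containing `B` and closed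
under coproducts of fewer than `α` objects. -/
def AlphaClosure (α : Cardinal.{v}) (B : Set C) : Set C :=
  ⋂₀ {S : Set C | B ⊆ S ∧ (0 : C) ∈ S ∧ (∀ ⦃X Y : C⦄, X ∈ S → Nonempty (X ≅ Y) → Y ∈ S) ∧
    (∀ T : Triangle C, (T ∈ distTriang C) → T.obj₁ ∈ S → T.obj₃ ∈ S → T.obj₂ ∈ S) ∧
    AlphaSmashClosed C α S}

/-- The class of all shifts `X⟦i⟧` of elements `X ∈ P` with `i` satisfying the predicate `p`. -/
def Shifts (P : Set C) (p : ℤ → Prop) : Set C :=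
  {Z | ∃ X ∈ P, ∃ i : ℤ, p i ∧ Nonempty (Z ≅ X⟦i⟧)}

/-!
Vanishing of `Hom(Z, N)` is encoded as `Subsingleton (Z ⟶ N)`. The left orthogonal `⊥N` of an
object is closed under extensions and coproducts, so it contains `[B]^α` once it contains `B`.

If every shift of `M` lies in `C_{w≥0}`, then `⊥M` contains every `P[i]`, hence all of `C_{w≥0}`,
which contains `M`; so `id_M = 0`. If `Hom(P[i], N) = 0` for all `i < 0`, then `⊥(N[1])` contains
`C_{w≤0}`, so in a weight decomposition `L → N[1] → R[1]` the first map vanishes and `N` is a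
retract of `R ∈ C_{w≥0}`.
-/

section Shift

variable {D : Type*} [Category D] [HasShift D ℤ]

lemma shifts_subset_leftOrthogonal {P : Set D} {p : ℤ → Prop} {N : D}
    (hP : ∀ X ∈ P, ∀ i, p i → Subsingleton (X⟦i⟧ ⟶ N)) :
    ∀ Z ∈ Shifts D P p, Subsingleton (Z ⟶ N) := by
  rintro Z ⟨X, hX, i, hi, ⟨e⟩⟩
  exact (e.homCongr (Iso.refl N)).subsingleton_congr.2 (hP X hX i hi)

lemma subsingleton_hom_shift_iff (X Y : D) {a b c : ℤ} (h : a + b = c) :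
    Subsingleton (X⟦c⟧ ⟶ Y⟦b⟧) ↔ Subsingleton (X⟦a⟧ ⟶ Y) :=
  (((shiftFunctorAdd' D a b c h).app X).homCongr (Iso.refl _)).trans
    (Functor.FullyFaithful.ofFullyFaithful (shiftFunctor D b)).homEquiv.symm |>.subsingleton_congr

end Shift

section

variable {C}

lemma alphaClosure_subset {α : Cardinal.{v}} {B S : Set C} (hB : B ⊆ S) (h0 : (0 : C) ∈ S)
    (hiso : ∀ ⦃X Y : C⦄, X ∈ S → Nonempty (X ≅ Y) → Y ∈ S)
    (hext : ∀ T ∈ distTriang C, T.obj₁ ∈ S → T.obj₃ ∈ S → T.obj₂ ∈ S)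
    (hcoprod : AlphaSmashClosed C α S) : AlphaClosure C α B ⊆ S :=
  fun _ hZ => hZ S ⟨hB, h0, hiso, hext, hcoprod⟩

lemma subset_alphaClosure (α : Cardinal.{v}) (B : Set C) : B ⊆ AlphaClosure C α B :=
  fun _ hZ _ hS => hS.1 hZ

lemma alphaClosure_subset_leftOrthogonal {α : Cardinal.{v}} {B : Set C} {N : C}
    (hB : ∀ Z ∈ B, Subsingleton (Z ⟶ N)) :
    ∀ Z ∈ AlphaClosure C α B, Subsingleton (Z ⟶ N) := by
  refine alphaClosure_subset hB ?_ ?_ ?_ ?_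
  · exact ⟨(isZero_zero C).eq_of_src⟩
  · rintro X Y (hX : Subsingleton (X ⟶ N)) ⟨e⟩
    exact (e.homCongr (Iso.refl N)).subsingleton_congr.1 hX
  · intro T hT (h₁ : Subsingleton (T.obj₁ ⟶ N)) (h₃ : Subsingleton (T.obj₃ ⟶ N))
    refine subsingleton_of_forall_eq 0 fun g => ?_
    obtain ⟨h, rfl⟩ := Triangle.yoneda_exact₂ T hT g (Subsingleton.elim _ _)
    rw [Subsingleton.elim h 0, comp_zero]
  · intro I _ f _ hf
    exact ⟨fun g g' => Sigma.hom_ext _ _ fun j => (hf j).elim _ _⟩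

noncomputable def Triangle.retractOfMor₁EqZero (T : Triangle C) (hT : T ∈ distTriang C)
    (h : T.mor₁ = 0) : Retract T.obj₂ T.obj₃ where
  i := T.mor₂
  r := (Triangle.yoneda_exact₂ T hT (𝟙 _) (by rw [h, zero_comp])).choose
  retract := ((Triangle.yoneda_exact₂ T hT (𝟙 _) (by rw [h, zero_comp])).choose_spec).symm

namespace WeightStructure

variable (w : WeightStructure C)

lemma mem_ge_of_retract {X Y : C} (hY : Y ∈ w.ge) (h : Retract X Y) : X ∈ w.ge :=
  w.ge_retract hY ⟨h.i, h.r, h.retract⟩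

lemma subsingleton_hom_of_mem_ge {X N : C} {i : ℤ} (hX : X⟦i + 1⟧ ∈ w.le) (hN : N ∈ w.ge) :
    Subsingleton (X⟦i⟧ ⟶ N) :=
  (subsingleton_hom_shift_iff X N rfl).1 (subsingleton_of_forall_eq 0 (w.orth hX hN))

lemma mem_ge_of_subsingleton_hom {N : C} (hN : ∀ Z ∈ w.le, Subsingleton (Z ⟶ N⟦(1 : ℤ)⟧)) :
    N ∈ w.ge := by
  obtain ⟨L, R, f, g, h, hL, hR, hT⟩ := w.wd (N⟦(1 : ℤ)⟧)
  have hf : f = 0 := (hN L hL).elim _ _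
  let e := shiftFunctorCompIsoId C (1 : ℤ) (-1) (add_neg_cancel 1)
  exact w.mem_ge_of_retract hR <| (Retract.ofIso (e.app N).symm).trans <|
    ((Triangle.retractOfMor₁EqZero _ hT hf).map (shiftFunctor C (-1))).trans
      (Retract.ofIso (e.app R))

end WeightStructure

end

theorem left_nondegenerate_and_generated
    (α : Cardinal.{v})
    (w : WeightStructure C) (P : Set C)
    (hge : w.ge = AlphaClosure C α (Shifts C P (fun i => 0 ≤ i)))
    (hle : w.le = AlphaClosure C α (Shifts C P (fun i => i ≤ 0))) :
    (∀ M : C, (∀ n : ℤ, M⟦(-n : ℤ)⟧ ∈ w.ge) → IsZero M) ∧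
    w.ge = {N : C | ∀ X ∈ P, ∀ i : ℤ, i < 0 → ∀ f : X⟦i⟧ ⟶ N, f = 0} := by
  have hP : ∀ X ∈ P, ∀ i : ℤ, i ≤ 0 → X⟦i⟧ ∈ w.le := fun X hX i hi =>
    hle ▸ subset_alphaClosure α _ ⟨X, hX, i, hi, ⟨Iso.refl _⟩⟩
  have hge_orth : ∀ N ∈ w.ge, ∀ X ∈ P, ∀ i : ℤ, i < 0 → Subsingleton (X⟦i⟧ ⟶ N) :=
    fun N hN X hX i hi => w.subsingleton_hom_of_mem_ge (hP X hX (i + 1) (by omega)) hN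
  refine ⟨fun M hM => ?_, Set.ext fun N => ⟨fun hN X hX i hi => ?_, fun hN => ?_⟩⟩
  · have hshifts : ∀ X ∈ P, ∀ i : ℤ, Subsingleton (X⟦i⟧ ⟶ M) := fun X hX i =>
      (subsingleton_hom_shift_iff X M (by ring : i + -(i + 1) = -1)).1
        (hge_orth _ (hM (i + 1)) X hX (-1) (by norm_num))
    have hM₀ : M ∈ w.ge := w.mem_ge_of_retract (hM 0)
      (Retract.ofIso ((shiftFunctorZero' C (-0 : ℤ) neg_zero).app M).symm)
    have hEnd : Subsingleton (M ⟶ M) := alphaClosure_subset_leftOrthogonal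
      (shifts_subset_leftOrthogonal fun X hX i _ => hshifts X hX i) M (hge ▸ hM₀)
    exact (IsZero.iff_id_eq_zero M).2 (Subsingleton.elim _ _)
  · exact (subsingleton_iff_forall_eq 0).1 (hge_orth N hN X hX i hi)
  · refine w.mem_ge_of_subsingleton_hom fun Z hZ => ?_
    refine alphaClosure_subset_leftOrthogonal (shifts_subset_leftOrthogonal ?_) Z (hle ▸ hZ)
    intro X hX i _
    exact (subsingleton_hom_shift_iff X N (sub_add_cancel i 1)).2
      (subsingleton_of_forall_eq 0 (hN X hX (i - 1) (by omega)))
end
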